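/- For every point (p_1,…,p_K) ∈ ∏_{k=1}^K Δ_{n_k}, every k ∈ {1,…,K} and every m ∈ {1,…,n_k}, the first-order partial derivative of the Multinoulli Extension satisfies ∂F/∂p_k^m (p_1,…,p_K) = B_k · E[ f( v_k^m | ∪_{(k̂,b̂) ≠ (k,1)} {e_{k̂}^{b̂}} ) ], where the union ranges over all pairs (k̂,b̂) with k̂ ∈ {1,…,K}, b̂ ∈ {1,…,B_{k̂}} except (k̂,b̂) = (k,1), the random elements e_{k̂}^{b̂} are mutually independent with e_{k̂}^{b̂} ∼ Multi(p_{k̂}), and a draw of ∅ contributes no element to the union. -/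

import Mathlib

open Finset

noncomputable section

namespace Multinoulli

variable {K : ℕ}

/-- An element of the ground set `V`: a community index `k` together with the
index `m` of the element `v_k^m` inside its community `V_k`. -/
abbrev Elem (n : Fin K → ℕ) := Σ k : Fin K, Fin (n k)

/-- A sampling slot: a community `k` together with a trial index `b ∈ {1,…,B_k}`. -/
abbrev Slot (B : Fin K → ℕ) := Σ k : Fin K, Fin (B k)

/-- A joint outcome of all the independent multinoulli trials; `none` encodes a
draw of `∅`, which contributes no element. -/
abbrev Choice (n B : Fin K → ℕ) := ∀ s : Slot B, Option (Fin (n s.1))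

/-- The probability that `Multi(p_k)` (the `k`-th block of `x`) assigns to a given
outcome: `x ⟨k,m⟩` for the element `v_k^m` and `1 - Σ_m x ⟨k,m⟩` for `∅`. -/
def prob (n : Fin K → ℕ) (x : Elem n → ℝ) (k : Fin K) : Option (Fin (n k)) → ℝ
  | some m => x ⟨k, m⟩
  | none => 1 - ∑ m : Fin (n k), x ⟨k, m⟩

/-- The probability of the joint outcome `e` (all trials are mutually independent). -/
def jointProb (n B : Fin K → ℕ) (x : Elem n → ℝ) (e : Choice n B) : ℝ :=
  ∏ s : Slot B, prob n x s.1 (e s)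

/-- The subset of the ground set selected by the trials whose slot lies in `A`
(a draw of `∅` contributes no element to the union). -/
def chosen (n B : Fin K → ℕ) (e : Choice n B) (A : Finset (Slot B)) : Finset (Elem n) :=
  A.biUnion fun s => ((e s).map fun m => (⟨s.1, m⟩ : Elem n)).toFinset

/-- The Multinoulli Extension `F` of the set function `f`:
`F(x) = E[f(∪_{k,b} {e_k^b})]` for mutually independent `e_k^b ∼ Multi(p_k)`. -/
def ME (n B : Fin K → ℕ) (f : Finset (Elem n) → ℝ) (x : Elem n → ℝ) : ℝ :=
  ∑ e : Choice n B, f (chosen n B e Finset.univ) * jointProb n B x e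

/-- The first-order partial derivative `∂G/∂x_i` at `x`. -/
def pderiv (n : Fin K → ℕ) (G : (Elem n → ℝ) → ℝ) (i : Elem n) (x : Elem n → ℝ) : ℝ :=
  deriv (fun t => G (Function.update x i t)) (x i)

/-- The gradient `∇G(x)`. -/
def grad (n : Fin K → ℕ) (G : (Elem n → ℝ) → ℝ) (x : Elem n → ℝ) : Elem n → ℝ :=
  fun i => pderiv n G i x

/-- The second-order partial derivative `∂²G/∂x_i∂x_j` at `x`. -/
def pderiv2 (n : Fin K → ℕ) (G : (Elem n → ℝ) → ℝ) (i j : Elem n) (x : Elem n → ℝ) : ℝ :=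
  pderiv n (fun y => pderiv n G j y) i x

/-- The Euclidean inner product on `∏_k ℝ^{n_k}`. -/
def inner' (n : Fin K → ℕ) (u v : Elem n → ℝ) : ℝ := ∑ i : Elem n, u i * v i

/-- Membership in the product of simplices `∏_{k=1}^K Δ_{n_k}`. -/
def InSimplex (n : Fin K → ℕ) (x : Elem n → ℝ) : Prop :=
  (∀ i, 0 ≤ x i) ∧ ∀ k : Fin K, ∑ m : Fin (n k), x ⟨k, m⟩ ≤ 1

/-- Feasibility for the partition constraint: `|S ∩ V_k| ≤ B_k` for all `k`. -/
def Feasible (n B : Fin K → ℕ) (S : Finset (Elem n)) : Prop :=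
  ∀ k : Fin K, (S.filter fun i => i.1 = k).card ≤ B k

/-- Monotonicity of a set function. -/
def MonotoneSet (n : Fin K → ℕ) (f : Finset (Elem n) → ℝ) : Prop :=
  ∀ A B : Finset (Elem n), A ⊆ B → f A ≤ f B

/-- The marginal contribution `f(v|A) = f(A ∪ {v}) - f(A)`. -/
def marg (n : Fin K → ℕ) (f : Finset (Elem n) → ℝ) (v : Elem n) (A : Finset (Elem n)) : ℝ :=
  f (insert v A) - f A

/-- `α`-weak DR-submodularity: `f(v|A) ≥ α·f(v|B)` for all `A ⊆ B` and `v ∉ B`. -/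
def WeaklyDR (n : Fin K → ℕ) (f : Finset (Elem n) → ℝ) (α : ℝ) : Prop :=
  ∀ A B : Finset (Elem n), A ⊆ B → ∀ v, v ∉ B → α * marg n f v B ≤ marg n f v A

/-- `γ`-weak submodularity from below. -/
def WeaklyBelow (n : Fin K → ℕ) (f : Finset (Elem n) → ℝ) (γ : ℝ) : Prop :=
  ∀ A B : Finset (Elem n), A ⊆ B → γ * (f B - f A) ≤ ∑ v ∈ B \ A, marg n f v A

/-- `β`-weak submodularity from above. -/
def WeaklyAbove (n : Fin K → ℕ) (f : Finset (Elem n) → ℝ) (β : ℝ) : Prop :=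
  ∀ A B : Finset (Elem n), A ⊆ B → ∑ v ∈ B \ A, marg n f v (B.erase v) ≤ β * (f B - f A)

/-- The scaled indicator vector `Σ_{k=1}^K (1/B_k)·1_{S∩V_k}`. -/
def indVec (n B : Fin K → ℕ) (S : Finset (Elem n)) : Elem n → ℝ :=
  fun i => if i ∈ S then ((B i.1 : ℝ))⁻¹ else 0

/-
Every trial probability is affine in `x`, so by the product rule `∂F/∂x_{k,m}` is a sum over the
trials `(k', b)` of the terms in which only the factor of that trial is differentiated; these vanish
unless `k' = k`. With the other trials fixed, the derivative of that factor is `+1` at `v_k^m` and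
`-1` at `∅`, so the term of trial `(k, b)` is `E[f(v_k^m | ∪_{(k', b') ≠ (k, b)} {e_{k'}^{b'}})]`.
The trials of one community are exchangeable, so all `B_k` terms equal the one for `b = 1`.
-/

theorem _root_.Fintype.sum_eq_sum_of_sum_update_eq {ι M : Type*} [DecidableEq ι] [Fintype ι]
    [AddCommMonoid M] {α : ι → Type*} [∀ j, Fintype (α j)] (i : ι) {g h : (∀ j, α j) → M}
    (hgh : ∀ a, ∑ o, g (Function.update a i o) = ∑ o, h (Function.update a i o)) :
    ∑ a, g a = ∑ a, h a := by
  let E := Equiv.piSplitAt i α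
  have split (φ : (∀ j, α j) → M) : ∑ a, φ a = ∑ r, ∑ o, φ (E.symm (o, r)) := by
    rw [← E.symm.sum_comp, Fintype.sum_prod_type_right]
  have update_split (o o' : α i) r : E.symm (o, r) = Function.update (E.symm (o', r)) i o := by
    ext j
    rcases eq_or_ne j i with rfl | hj
    · simp only [E, Equiv.piSplitAt_symm_apply, Function.update_self]
      rfl
    · simp only [E, Equiv.piSplitAt_symm_apply, Function.update_of_ne hj, dif_neg hj]
  rw [split g, split h]
  refine Finset.sum_congr rfl fun r _ => ?_
  rcases isEmpty_or_nonempty (α i) with hα | ⟨⟨o₀⟩⟩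
  · simp
  · simpa only [← update_split] using hgh (E.symm (o₀, r))

section Derivative

variable (n B : Fin K → ℕ)

/-- `prob` is affine in `x`, so this is its derivative along the `i`-th coordinate. -/
def dprob (i : Elem n) (k' : Fin K) (o : Option (Fin (n k'))) : ℝ :=
  prob n (Pi.single i 1) k' o - prob n 0 k' o

lemma prob_update (x : Elem n → ℝ) (i : Elem n) (t : ℝ) (k' : Fin K) (o : Option (Fin (n k'))) :
    prob n (Function.update x i t) k' o = prob n x k' o + (t - x i) * dprob n i k' o := by
  have coord (j : Elem n) :
      Function.update x i t j = x j + (t - x i) * (Pi.single i 1 : Elem n → ℝ) j := by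
    rcases eq_or_ne j i with rfl | hj
    · simp
    · simp [hj]
  cases o with
  | some m' => simp [prob, dprob, coord]
  | none =>
    simp only [prob, dprob, coord, sum_add_distrib, ← mul_sum, Pi.zero_apply, sum_const_zero]
    ring

lemma hasDerivAt_prob_update (x : Elem n → ℝ) (i : Elem n) (t : ℝ) (k' : Fin K)
    (o : Option (Fin (n k'))) :
    HasDerivAt (fun t => prob n (Function.update x i t) k' o) (dprob n i k' o) t := by
  simp only [prob_update]
  simpa using (((hasDerivAt_id t).sub_const (x i)).mul_const (dprob n i k' o)).const_add
    (prob n x k' o)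

lemma dprob_of_ne {k k' : Fin K} (m : Fin (n k)) (h : k' ≠ k) (o : Option (Fin (n k'))) :
    dprob n ⟨k, m⟩ k' o = 0 := by
  cases o <;> simp [dprob, prob, h]

lemma sum_mul_dprob (k : Fin K) (m : Fin (n k)) (g : Option (Fin (n k)) → ℝ) :
    ∑ o, g o * dprob n ⟨k, m⟩ k o = g (some m) - g none := by
  simp [Fintype.sum_option, dprob, prob, Pi.single_apply, neg_add_eq_sub]

lemma hasDerivAt_jointProb_update (x : Elem n → ℝ) (i : Elem n) (e : Choice n B) :
    HasDerivAt (fun t => jointProb n B (Function.update x i t) e)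
      (∑ s : Slot B, (∏ s' ∈ univ.erase s, prob n x s'.1 (e s')) * dprob n i s.1 (e s)) (x i) := by
  simpa [jointProb, Function.update_eq_self] using HasDerivAt.fun_finsetProd (u := univ)
    fun (s : Slot B) _ => hasDerivAt_prob_update n x i (x i) s.1 (e s)

/-- The term of the product rule for `∂(ME)/∂x_i` in which only the factor of trial `s` is
differentiated. -/
def slotDeriv (f : Finset (Elem n) → ℝ) (x : Elem n → ℝ) (i : Elem n) (s : Slot B) : ℝ :=
  ∑ e : Choice n B,
    f (chosen n B e univ) * ((∏ s' ∈ univ.erase s, prob n x s'.1 (e s')) * dprob n i s.1 (e s))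

lemma hasDerivAt_ME_update (f : Finset (Elem n) → ℝ) (x : Elem n → ℝ) (i : Elem n) :
    HasDerivAt (fun t => ME n B f (Function.update x i t))
      (∑ s : Slot B, slotDeriv n B f x i s) (x i) := by
  have h := HasDerivAt.fun_sum (u := univ) fun (e : Choice n B) _ =>
    (hasDerivAt_jointProb_update n B x i e).const_mul (f (chosen n B e univ))
  simp only [Finset.mul_sum] at h
  rwa [Finset.sum_comm] at h

lemma slotDeriv_of_ne (f : Finset (Elem n) → ℝ) (x : Elem n → ℝ) {k : Fin K} (m : Fin (n k))
    {s : Slot B} (hs : s.1 ≠ k) : slotDeriv n B f x ⟨k, m⟩ s = 0 := by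
  simp [slotDeriv, dprob_of_ne n m hs]

end Derivative

section Conditioning

variable (n B : Fin K → ℕ)

lemma sum_prob (x : Elem n → ℝ) (k : Fin K) : ∑ o, prob n x k o = 1 := by
  simp [Fintype.sum_option, prob]

lemma chosen_update_of_notMem (e : Choice n B) {s : Slot B} (o : Option (Fin (n s.1)))
    {A : Finset (Slot B)} (hs : s ∉ A) : chosen n B (Function.update e s o) A = chosen n B e A :=
  Finset.biUnion_congr rfl fun _ hs' => by rw [Function.update_of_ne (ne_of_mem_of_not_mem hs' hs)]

lemma chosen_update_univ (e : Choice n B) (s : Slot B) (o : Option (Fin (n s.1))) :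
    chosen n B (Function.update e s o) univ
      = (o.map (Sigma.mk s.1)).toFinset ∪ chosen n B e (univ.erase s) := by
  conv_lhs => rw [← insert_erase (mem_univ s)]
  rw [← chosen_update_of_notMem n B e o (notMem_erase s univ)]
  simp only [chosen, biUnion_insert, Function.update_self]

lemma prod_erase_update (x : Elem n → ℝ) (e : Choice n B) (s : Slot B) (o : Option (Fin (n s.1))) :
    ∏ s' ∈ univ.erase s, prob n x s'.1 (Function.update e s o s')
      = ∏ s' ∈ univ.erase s, prob n x s'.1 (e s') :=
  Finset.prod_congr rfl fun _ hs' => by rw [Function.update_of_ne (ne_of_mem_erase hs')]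

lemma jointProb_update (x : Elem n → ℝ) (e : Choice n B) (s : Slot B) (o : Option (Fin (n s.1))) :
    jointProb n B x (Function.update e s o)
      = prob n x s.1 o * ∏ s' ∈ univ.erase s, prob n x s'.1 (e s') := by
  rw [jointProb, ← mul_prod_erase _ _ (mem_univ s), Function.update_self, prod_erase_update]

lemma slotDeriv_self (f : Finset (Elem n) → ℝ) (x : Elem n → ℝ) (s : Slot B) (m : Fin (n s.1)) :
    slotDeriv n B f x ⟨s.1, m⟩ s
      = ∑ e : Choice n B, marg n f ⟨s.1, m⟩ (chosen n B e (univ.erase s)) * jointProb n B x e := by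
  refine Fintype.sum_eq_sum_of_sum_update_eq s fun e => ?_
  set C := chosen n B e (univ.erase s)
  set P := ∏ s' ∈ univ.erase s, prob n x s'.1 (e s')
  calc ∑ o, f (chosen n B (Function.update e s o) univ) *
          ((∏ s' ∈ univ.erase s, prob n x s'.1 (Function.update e s o s')) *
            dprob n ⟨s.1, m⟩ s.1 (Function.update e s o s))
      = P * ∑ o, f ((o.map (Sigma.mk s.1)).toFinset ∪ C) * dprob n ⟨s.1, m⟩ s.1 o := by
        simp only [chosen_update_univ, prod_erase_update, Function.update_self, Finset.mul_sum]
        exact Finset.sum_congr rfl fun _ _ => by ring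
    _ = marg n f ⟨s.1, m⟩ C * P * ∑ o, prob n x s.1 o := by
        rw [sum_mul_dprob, sum_prob, marg]
        simp only [Option.map_some, Option.map_none, Option.toFinset_some, Option.toFinset_none,
          empty_union, ← insert_eq]
        ring
    _ = ∑ o, marg n f ⟨s.1, m⟩ (chosen n B (Function.update e s o) (univ.erase s)) *
          jointProb n B x (Function.update e s o) := by
        simp only [chosen_update_of_notMem n B e _ (notMem_erase s univ), jointProb_update,
          Finset.mul_sum]
        exact Finset.sum_congr rfl fun _ _ => by ring

end Conditioning

section Exchangeability

variable (n B : Fin K → ℕ)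

/-- `e ∘ σ` is again a `Choice` because `σ` fixes the community index definitionally. -/
def relabelTrials (τ : ∀ k, Equiv.Perm (Fin (B k))) : Choice n B ≃ Choice n B where
  toFun e s := e (Equiv.sigmaCongrRight τ s)
  invFun e s := e ((Equiv.sigmaCongrRight τ).symm s)
  left_inv e := funext fun ⟨k, b⟩ => by
    show e ⟨k, τ k ((τ k).symm b)⟩ = e ⟨k, b⟩
    rw [Equiv.apply_symm_apply]
  right_inv e := funext fun ⟨k, b⟩ => by
    show e ⟨k, (τ k).symm (τ k b)⟩ = e ⟨k, b⟩
    rw [Equiv.symm_apply_apply]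

lemma jointProb_relabelTrials (x : Elem n → ℝ) (τ : ∀ k, Equiv.Perm (Fin (B k))) (e : Choice n B) :
    jointProb n B x (relabelTrials n B τ e) = jointProb n B x e := by
  unfold jointProb
  exact (Equiv.sigmaCongrRight τ).prod_comp fun s => prob n x s.1 (e s)

lemma chosen_relabelTrials (τ : ∀ k, Equiv.Perm (Fin (B k))) (e : Choice n B)
    (A : Finset (Slot B)) :
    chosen n B (relabelTrials n B τ e) A
      = chosen n B e (A.map (Equiv.sigmaCongrRight τ).toEmbedding) := by
  rw [chosen, chosen, map_eq_image, image_biUnion]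
  exact Finset.biUnion_congr rfl fun s _ => rfl

lemma sum_chosen_erase_mul_jointProb (g : Finset (Elem n) → ℝ) (x : Elem n → ℝ) (k : Fin K)
    (b b' : Fin (B k)) :
    ∑ e : Choice n B, g (chosen n B e (univ.erase ⟨k, b⟩)) * jointProb n B x e
      = ∑ e : Choice n B, g (chosen n B e (univ.erase ⟨k, b'⟩)) * jointProb n B x e := by
  let τ : ∀ k, Equiv.Perm (Fin (B k)) := Pi.mulSingle k (Equiv.swap b b')
  refine Fintype.sum_equiv (relabelTrials n B τ) _ _ fun e => ?_
  rw [jointProb_relabelTrials, chosen_relabelTrials, map_erase, map_univ_equiv]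
  simp [τ]

end Exchangeability

theorem multinoulliExtension_pderiv_general {K : ℕ} (n B : Fin K → ℕ)
    (hB : ∀ k, 0 < B k)
    (f : Finset (Elem n) → ℝ)
    (x : Elem n → ℝ) (k : Fin K) (m : Fin (n k)) :
    pderiv n (ME n B f) ⟨k, m⟩ x =
      (B k : ℝ) * ∑ e : Choice n B,
        marg n f ⟨k, m⟩ (chosen n B e (Finset.univ.erase (⟨k, ⟨0, hB k⟩⟩ : Slot B))) *
          jointProb n B x e := by
  rw [pderiv, (hasDerivAt_ME_update n B f x ⟨k, m⟩).deriv, Fintype.sum_sigma,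
    Finset.sum_eq_single_of_mem k (mem_univ k)
      fun k' _ hk' => Finset.sum_eq_zero fun b _ => slotDeriv_of_ne n B f x m hk']
  calc ∑ b : Fin (B k), slotDeriv n B f x ⟨k, m⟩ ⟨k, b⟩
      = ∑ _b : Fin (B k), ∑ e : Choice n B,
          marg n f ⟨k, m⟩ (chosen n B e (univ.erase ⟨k, ⟨0, hB k⟩⟩)) * jointProb n B x e :=
        Finset.sum_congr rfl fun b _ => (slotDeriv_self n B f x ⟨k, b⟩ m).trans
          (sum_chosen_erase_mul_jointProb n B _ x k b ⟨0, hB k⟩)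
    _ = _ := by simp

theorem multinoulliExtension_pderiv {K : ℕ} (n B : Fin K → ℕ) (hn : ∀ k, 1 ≤ n k)
    (hB : ∀ k, 0 < B k) (hBn : ∀ k, B k ≤ n k)
    (f : Finset (Elem n) → ℝ) (hf0 : ∀ S, 0 ≤ f S)
    (x : Elem n → ℝ) (hx : InSimplex n x) (k : Fin K) (m : Fin (n k)) :
    pderiv n (ME n B f) ⟨k, m⟩ x =
      (B k : ℝ) * ∑ e : Choice n B,
        marg n f ⟨k, m⟩ (chosen n B e (Finset.univ.erase (⟨k, ⟨0, hB k⟩⟩ : Slot B))) *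
          jointProb n B x e :=
  multinoulliExtension_pderiv_general n B hB f x k m

end Multinoulli
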